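/- rPCTL is at least as expressive as PCTL(◊,□): for every PCTL(◊,□) formula φ there exists an rPCTL formula φ'' such that for every DTMC M and every state s of M, M,s ⊨ φ if and only if V_M(s, φ'') = 1111. -/

import Mathlib

open MeasureTheory
open scoped Classical ENNReal NNReal

/-! ### Discrete-time Markov chains, paths, cylinder sets -/

/-- A discrete-time Markov chain over atomic propositions `AP` with a finite
state set `S`, an initial state, a stochastic transition function with values
in `[0,1]`, and a labeling function. -/
structure DTMC (AP : Type) (S : Type) [Fintype S] where
  init : S
  trans : S → S → ℝ≥0
  trans_le_one : ∀ s s', trans s s' ≤ 1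
  trans_sum_one : ∀ s, ∑ s', trans s s' = 1
  label : S → Set AP

namespace DTMC

variable {AP S : Type} [Fintype S]

/-- Paths of `M` starting in `s`. -/
def Path (M : DTMC AP S) (s : S) : Type :=
  { π : ℕ → S // π 0 = s ∧ ∀ n, 0 < M.trans (π n) (π (n + 1)) }

/-- Paths of `M` (with arbitrary first state). -/
def PathU (M : DTMC AP S) : Type :=
  { π : ℕ → S // ∀ n, 0 < M.trans (π n) (π (n + 1)) }

/-- Forget the start state of a path. -/
def Path.toU {M : DTMC AP S} {s : S} (π : M.Path s) : M.PathU :=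
  ⟨π.1, π.2.2⟩

/-- The suffix `π[n..]` of a path. -/
def PathU.suffix {M : DTMC AP S} (π : M.PathU) (n : ℕ) : M.PathU :=
  ⟨fun i => π.1 (n + i), fun i => π.2 (n + i)⟩

/-- `ρ 0, …, ρ n` is a path prefix of `M` starting in `s`. -/
def IsPrefix (M : DTMC AP S) (s : S) (ρ : ℕ → S) (n : ℕ) : Prop :=
  ρ 0 = s ∧ ∀ i < n, 0 < M.trans (ρ i) (ρ (i + 1))

/-- The cylinder set of the prefix `ρ 0, …, ρ n`: all paths starting in `s`
that extend this prefix. -/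
def Cyl (M : DTMC AP S) (s : S) (ρ : ℕ → S) (n : ℕ) : Set (M.Path s) :=
  { π | ∀ i ≤ n, π.1 i = ρ i }

/-- The σ-algebra on `Paths(M,s)` generated by the cylinder sets. -/
instance instMeasurableSpacePath (M : DTMC AP S) (s : S) : MeasurableSpace (M.Path s) :=
  .generateFrom { A | ∃ ρ n, M.IsPrefix s ρ n ∧ A = M.Cyl s ρ n }

/-- `μ` is a probability measure on `Paths(M,s)` giving each cylinder set the
product of the transition probabilities along its prefix. -/
def IsCylinderMeasure (M : DTMC AP S) (s : S) (μ : Measure (M.Path s)) : Prop :=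
  IsProbabilityMeasure μ ∧
    ∀ ρ n, M.IsPrefix s ρ n →
      μ (M.Cyl s ρ n) = ∏ j ∈ Finset.range n, (M.trans (ρ j) (ρ (j + 1)) : ℝ≥0∞)

/-- Paths staying in `S'` forever. -/
def Safe (M : DTMC AP S) (s : S) (S' : Set S) : Set (M.Path s) :=
  { π | ∀ n, π.1 n ∈ S' }

/-- Paths staying in `S'` from some point on (all but finitely many positions). -/
def CoBuchi (M : DTMC AP S) (s : S) (S' : Set S) : Set (M.Path s) :=
  { π | ∃ m, ∀ n, m ≤ n → π.1 n ∈ S' }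

/-- Paths visiting `S'` infinitely often. -/
def Buchi (M : DTMC AP S) (s : S) (S' : Set S) : Set (M.Path s) :=
  { π | ∀ m, ∃ n, m ≤ n ∧ π.1 n ∈ S' }

/-- Paths visiting `S'` at least once. -/
def Reach (M : DTMC AP S) (s : S) (S' : Set S) : Set (M.Path s) :=
  { π | ∃ n, π.1 n ∈ S' }

end DTMC

/-! ### Truth values -/

/-- Four-bit truth values `b₁b₂b₃b₄`. -/
structure TV where
  b1 : Bool
  b2 : Bool
  b3 : Bool
  b4 : Bool
deriving DecidableEq

namespace TV

/-- The truth value `1111`. -/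
def top : TV := ⟨true, true, true, true⟩

/-- The truth value `0000`. -/
def bot : TV := ⟨false, false, false, false⟩

instance : LE TV := ⟨fun v w => v.b1 ≤ w.b1 ∧ v.b2 ≤ w.b2 ∧ v.b3 ≤ w.b3 ∧ v.b4 ≤ w.b4⟩

instance : LT TV := ⟨fun v w => v ≤ w ∧ ¬w ≤ v⟩

/-- Minimum (bitwise). -/
def inf (v w : TV) : TV := ⟨v.b1 && w.b1, v.b2 && w.b2, v.b3 && w.b3, v.b4 && w.b4⟩

/-- Maximum (bitwise). -/
def sup (v w : TV) : TV := ⟨v.b1 || w.b1, v.b2 || w.b2, v.b3 || w.b3, v.b4 || w.b4⟩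

/-- `v` lies in `B4`, i.e. its bits are monotonically nondecreasing. -/
def InB4 (v : TV) : Prop := v.b1 ≤ v.b2 ∧ v.b2 ≤ v.b3 ∧ v.b3 ≤ v.b4

end TV

/-- The five truth values `1111 ≻ 0111 ≻ 0011 ≻ 0001 ≻ 0000`. -/
inductive B4 : Type
  | t1111 | t0111 | t0011 | t0001 | t0000
deriving DecidableEq

/-- The bit vector of an element of `B4`. -/
def B4.toTV : B4 → TV
  | .t1111 => ⟨true, true, true, true⟩
  | .t0111 => ⟨false, true, true, true⟩
  | .t0011 => ⟨false, false, true, true⟩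
  | .t0001 => ⟨false, false, false, true⟩
  | .t0000 => ⟨false, false, false, false⟩

/-- `v ⪰ t` for a truth value `v` and `t ∈ B4`: if `t` has `k` leading zeros,
then `v ⪰ t` is determined by bit `k+1` of `v`. -/
def TV.ge4 (v : TV) : B4 → Prop
  | .t1111 => v.b1 = true
  | .t0111 => v.b2 = true
  | .t0011 => v.b3 = true
  | .t0001 => v.b4 = true
  | .t0000 => True

/-- The Boolean truth value of a proposition. -/
noncomputable def boolOf (P : Prop) : Bool := @decide P (Classical.propDecidable P)

/-- Comparison operators `∼ ∈ {<, ≤, =, ≥, >}` for probability thresholds. -/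
inductive PCmp : Type
  | lt | le | eq | ge | gt

/-- `PCmp.holds c a b` expresses `a ∼ b`. -/
def PCmp.holds : PCmp → ℝ≥0∞ → ℝ≥0∞ → Prop
  | .lt, a, b => a < b
  | .le, a, b => a ≤ b
  | .eq, a, b => a = b
  | .ge, a, b => b ≤ a
  | .gt, a, b => b < a

/-- Rational probability thresholds `λ ∈ [0,1] ∩ ℚ`. -/
abbrev QProb : Type := Set.Icc (0 : ℚ) 1

/-- The threshold as an extended nonnegative real. -/
noncomputable def QProb.toENNReal (q : QProb) : ℝ≥0∞ := ENNReal.ofReal ((q : ℚ) : ℝ)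

/-! ### PCTL(◊,□) and rPCTL: shared syntax and semantics -/

/-- Formulas of PCTL(◊,□) (equivalently, of rPCTL, whose temporal operators are
written with dots): `φ ::= p | ¬φ | φ∧φ | φ∨φ | φ→φ | P_{∼λ}[X φ] | P_{∼λ}[◊ φ] | P_{∼λ}[□ φ]`. -/
inductive PF (AP : Type) : Type
  | atom : AP → PF AP
  | not : PF AP → PF AP
  | and : PF AP → PF AP → PF AP
  | or : PF AP → PF AP → PF AP
  | imp : PF AP → PF AP → PF AP
  | probNext : PCmp → QProb → PF AP → PF AP
  | probEv : PCmp → QProb → PF AP → PF AP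
  | probAlw : PCmp → QProb → PF AP → PF AP

namespace PF

/-- `φ` contains no implications. -/
def NoImp {AP : Type} : PF AP → Prop
  | .atom _ => True
  | .not φ => φ.NoImp
  | .and φ ψ => φ.NoImp ∧ ψ.NoImp
  | .or φ ψ => φ.NoImp ∧ ψ.NoImp
  | .imp _ _ => False
  | .probNext _ _ φ => φ.NoImp
  | .probEv _ _ φ => φ.NoImp
  | .probAlw _ _ φ => φ.NoImp

/-- Rewriting every implication `ψ₀ → ψ₁` as `¬ψ₀ ∨ ψ₁`. -/
def rmImp {AP : Type} : PF AP → PF AP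
  | .atom p => .atom p
  | .not φ => .not φ.rmImp
  | .and φ ψ => .and φ.rmImp ψ.rmImp
  | .or φ ψ => .or φ.rmImp ψ.rmImp
  | .imp φ ψ => .or (.not φ.rmImp) ψ.rmImp
  | .probNext c l φ => .probNext c l φ.rmImp
  | .probEv c l φ => .probEv c l φ.rmImp
  | .probAlw c l φ => .probAlw c l φ.rmImp

end PF

/-- The standard PCTL semantics `M,s ⊨ φ`, relative to the family of cylinder-set
measures `μ s` on `Paths(M,s)`. -/
def PCTL.Sat {AP S : Type} [Fintype S] (M : DTMC AP S)
    (μ : ∀ s : S, MeasureTheory.Measure (M.Path s)) : PF AP → S → Prop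
  | .atom p, s => p ∈ M.label s
  | .not φ, s => ¬ PCTL.Sat M μ φ s
  | .and φ ψ, s => PCTL.Sat M μ φ s ∧ PCTL.Sat M μ ψ s
  | .or φ ψ, s => PCTL.Sat M μ φ s ∨ PCTL.Sat M μ ψ s
  | .imp φ ψ, s => PCTL.Sat M μ φ s → PCTL.Sat M μ ψ s
  | .probNext c l φ, s =>
      c.holds (μ s { π | PCTL.Sat M μ φ (π.1 1) }) l.toENNReal
  | .probEv c l φ, s =>
      c.holds (μ s { π | ∃ n, PCTL.Sat M μ φ (π.1 n) }) l.toENNReal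
  | .probAlw c l φ, s =>
      c.holds (μ s { π | ∀ n, PCTL.Sat M μ φ (π.1 n) }) l.toENNReal

/-- The rPCTL evaluation function `V_M`, mapping a state and a formula to a
truth value, relative to the family of cylinder-set measures `μ s`. -/
noncomputable def rPCTL.val {AP S : Type} [Fintype S] (M : DTMC AP S)
    (μ : ∀ s : S, MeasureTheory.Measure (M.Path s)) : PF AP → S → TV
  | .atom p, s => if p ∈ M.label s then TV.top else TV.bot
  | .not φ, s => if rPCTL.val M μ φ s = TV.top then TV.bot else TV.top
  | .and φ ψ, s => (rPCTL.val M μ φ s).inf (rPCTL.val M μ ψ s)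
  | .or φ ψ, s => (rPCTL.val M μ φ s).sup (rPCTL.val M μ ψ s)
  | .imp φ ψ, s =>
      if rPCTL.val M μ φ s ≤ rPCTL.val M μ ψ s then TV.top else rPCTL.val M μ ψ s
  | .probNext c l φ, s =>
      ⟨boolOf (c.holds (μ s { π | (rPCTL.val M μ φ (π.1 1)).b1 = true }) l.toENNReal),
       boolOf (c.holds (μ s { π | (rPCTL.val M μ φ (π.1 1)).b2 = true }) l.toENNReal),
       boolOf (c.holds (μ s { π | (rPCTL.val M μ φ (π.1 1)).b3 = true }) l.toENNReal),
       boolOf (c.holds (μ s { π | (rPCTL.val M μ φ (π.1 1)).b4 = true }) l.toENNReal)⟩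
  | .probEv c l φ, s =>
      ⟨boolOf (c.holds (μ s { π | ∃ n, (rPCTL.val M μ φ (π.1 n)).b1 = true }) l.toENNReal),
       boolOf (c.holds (μ s { π | ∃ n, (rPCTL.val M μ φ (π.1 n)).b2 = true }) l.toENNReal),
       boolOf (c.holds (μ s { π | ∃ n, (rPCTL.val M μ φ (π.1 n)).b3 = true }) l.toENNReal),
       boolOf (c.holds (μ s { π | ∃ n, (rPCTL.val M μ φ (π.1 n)).b4 = true }) l.toENNReal)⟩
  | .probAlw c l φ, s =>
      ⟨boolOf (c.holds (μ s { π | ∀ n, (rPCTL.val M μ φ (π.1 n)).b1 = true }) l.toENNReal),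
       boolOf (c.holds (μ s { π | ∃ m, ∀ n, m ≤ n → (rPCTL.val M μ φ (π.1 n)).b2 = true }) l.toENNReal),
       boolOf (c.holds (μ s { π | ∀ m, ∃ n, m ≤ n ∧ (rPCTL.val M μ φ (π.1 n)).b3 = true }) l.toENNReal),
       boolOf (c.holds (μ s { π | ∃ n, (rPCTL.val M μ φ (π.1 n)).b4 = true }) l.toENNReal)⟩

/-- The satisfaction set `Sat(φ, t) = {s ∈ S : V_M(s,φ) ⪰ t}`. -/
def rPCTL.SatSet {AP S : Type} [Fintype S] (M : DTMC AP S)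
    (μ : ∀ s : S, MeasureTheory.Measure (M.Path s)) (φ : PF AP) (t : B4) : Set S :=
  { s | (rPCTL.val M μ φ s).ge4 t }

/-!
rPCTL and PCTL(◊,□) differ only at `□`: on crisp arguments (value `1111` or `0000` at every
state) the operators `¬, ∧, ∨, →, Ẋ, ◊̇` again produce the crisp truth value of the corresponding
PCTL formula, whereas `□̇` replaces safety by co-Büchi, Büchi and reachability in its last three
bits. Safety is the complement of reaching `¬ψ`, and the path measures are probability measures,
so `P_{∼λ}[□ ψ]` holds iff `P_{∼'1-λ}[◊ ¬ψ]` does, with `∼'` the mirror image of `∼`. Rewriting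
every `□` this way gives an rPCTL formula whose value is `1111` exactly where the PCTL formula
holds, and `0000` elsewhere.
-/

def PCmp.flip : PCmp → PCmp
  | .lt => .gt
  | .le => .ge
  | .eq => .eq
  | .ge => .le
  | .gt => .lt

namespace PCmp

lemma holds_flip (c : PCmp) (a b : ℝ≥0∞) : c.flip.holds a b ↔ c.holds b a := by
  cases c
  exacts [Iff.rfl, Iff.rfl, eq_comm, Iff.rfl, Iff.rfl]

lemma holds_one_sub (c : PCmp) {a b : ℝ≥0∞} (ha : a ≤ 1) (hb : b ≤ 1) :
    c.holds (1 - a) (1 - b) ↔ c.holds b a := by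
  have hle : ∀ {x y : ℝ≥0∞}, y ≤ 1 → (1 - x ≤ 1 - y ↔ y ≤ x) :=
    fun hy => ENNReal.sub_le_sub_iff_left hy ENNReal.one_ne_top
  cases c
  · exact lt_iff_lt_of_le_iff_le (hle ha)
  · exact hle hb
  · exact (ENNReal.sub_right_inj ENNReal.one_ne_top ha hb).trans eq_comm
  · exact hle ha
  · exact lt_iff_lt_of_le_iff_le (hle hb)

end PCmp

def QProb.compl (q : QProb) : QProb :=
  ⟨1 - q, by linarith [q.2.2], by linarith [q.2.1]⟩

namespace QProb

lemma toENNReal_le_one (q : QProb) : q.toENNReal ≤ 1 :=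
  ENNReal.ofReal_le_one.mpr (by exact_mod_cast q.2.2)

lemma toENNReal_compl (q : QProb) : q.compl.toENNReal = 1 - q.toENNReal := by
  have hq : (0 : ℝ) ≤ (q : ℚ) := by exact_mod_cast q.2.1
  rw [toENNReal, toENNReal, ← ENNReal.ofReal_one, ← ENNReal.ofReal_sub _ hq]
  simp [compl]

end QProb

lemma PCmp.holds_flip_measure_compl {Ω : Type*} [MeasurableSpace Ω] {μ : Measure Ω}
    [IsProbabilityMeasure μ] {A : Set Ω} (hA : MeasurableSet A) (c : PCmp) (l : QProb) :
    c.flip.holds (μ Aᶜ) l.compl.toENNReal ↔ c.holds (μ A) l.toENNReal := by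
  rw [prob_compl_eq_one_sub hA, l.toENNReal_compl, c.holds_flip,
    c.holds_one_sub l.toENNReal_le_one prob_le_one]

namespace DTMC

variable {AP S : Type} [Fintype S] (M : DTMC AP S) (s : S)

lemma measurableSet_prefix_eq {n : ℕ} (f : Fin (n + 1) → S) :
    MeasurableSet {π : M.Path s | ∀ i : Fin (n + 1), π.1 i = f i} := by
  rcases Set.eq_empty_or_nonempty {π : M.Path s | ∀ i : Fin (n + 1), π.1 i = f i} with
    h | ⟨σ, hσ⟩
  · exact h ▸ MeasurableSet.empty
  have hcyl : {π : M.Path s | ∀ i : Fin (n + 1), π.1 i = f i} = M.Cyl s σ.1 n := by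
    ext π
    simp only [Set.mem_ofPred_eq, Cyl, ← hσ _]
    exact ⟨fun h i hi => h ⟨i, Nat.lt_succ_of_le hi⟩, fun h i => h i (Nat.le_of_lt_succ i.2)⟩
  exact hcyl ▸ MeasurableSpace.measurableSet_generateFrom
    ⟨σ.1, n, ⟨σ.2.1, fun i _ => σ.2.2 i⟩, rfl⟩

lemma measurableSet_of_prefix {n : ℕ} (P : (Fin (n + 1) → S) → Prop) :
    MeasurableSet {π : M.Path s | P fun i => π.1 i} := by
  have h : {π : M.Path s | P fun i => π.1 i} =
      ⋃ (f : Fin (n + 1) → S) (_ : P f), {π : M.Path s | ∀ i : Fin (n + 1), π.1 i = f i} := by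
    ext π
    simp only [Set.mem_ofPred_eq, Set.mem_iUnion]
    exact ⟨fun hP => ⟨_, hP, fun _ => rfl⟩, fun ⟨f, hf, hπ⟩ => funext hπ ▸ hf⟩
  rw [h]
  exact .iUnion fun f => .iUnion fun _ => M.measurableSet_prefix_eq s f

lemma measurableSet_eval_mem (n : ℕ) (S' : Set S) :
    MeasurableSet {π : M.Path s | π.1 n ∈ S'} :=
  M.measurableSet_of_prefix s fun f => f (Fin.last n) ∈ S'

lemma measurableSet_safe (S' : Set S) : MeasurableSet (M.Safe s S') := by
  rw [Safe, Set.ofPred_forall]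
  exact .iInter fun n => M.measurableSet_eval_mem s n S'

end DTMC

namespace TV

noncomputable def ofProp (P : Prop) : TV := if P then top else bot

lemma le_def {v w : TV} : v ≤ w ↔ v.b1 ≤ w.b1 ∧ v.b2 ≤ w.b2 ∧ v.b3 ≤ w.b3 ∧ v.b4 ≤ w.b4 :=
  Iff.rfl

variable {P Q : Prop}

@[simp] lemma ofProp_b1 : (ofProp P).b1 = true ↔ P := by
  by_cases h : P <;> simp [ofProp, h, top, bot]
@[simp] lemma ofProp_b2 : (ofProp P).b2 = true ↔ P := by
  by_cases h : P <;> simp [ofProp, h, top, bot]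
@[simp] lemma ofProp_b3 : (ofProp P).b3 = true ↔ P := by
  by_cases h : P <;> simp [ofProp, h, top, bot]
@[simp] lemma ofProp_b4 : (ofProp P).b4 = true ↔ P := by
  by_cases h : P <;> simp [ofProp, h, top, bot]

lemma ofProp_eq_top : ofProp P = top ↔ P := by
  by_cases h : P <;> simp [ofProp, h, top, bot]

lemma mk_boolOf (P : Prop) : (⟨boolOf P, boolOf P, boolOf P, boolOf P⟩ : TV) = ofProp P := by
  by_cases h : P <;> simp [ofProp, boolOf, h, top, bot]

lemma ite_ofProp_eq_top : (if ofProp P = top then bot else top) = ofProp ¬P := by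
  by_cases h : P <;> simp [ofProp, h]

lemma inf_ofProp : (ofProp P).inf (ofProp Q) = ofProp (P ∧ Q) := by
  by_cases hP : P <;> by_cases hQ : Q <;> simp [ofProp, inf, hP, hQ, top, bot]

lemma sup_ofProp : (ofProp P).sup (ofProp Q) = ofProp (P ∨ Q) := by
  by_cases hP : P <;> by_cases hQ : Q <;> simp [ofProp, sup, hP, hQ, top, bot]

lemma ofProp_le_ofProp : ofProp P ≤ ofProp Q ↔ (P → Q) := by
  by_cases hP : P <;> by_cases hQ : Q <;> simp [ofProp, hP, hQ, top, bot, le_def]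

lemma ite_ofProp_le : (if ofProp P ≤ ofProp Q then top else ofProp Q) = ofProp (P → Q) := by
  simp only [ofProp_le_ofProp]
  by_cases hP : P <;> by_cases hQ : Q <;> simp [ofProp, hP, hQ]

end TV

def PF.elimAlw {AP : Type} : PF AP → PF AP
  | .atom p => .atom p
  | .not φ => .not φ.elimAlw
  | .and φ ψ => .and φ.elimAlw ψ.elimAlw
  | .or φ ψ => .or φ.elimAlw ψ.elimAlw
  | .imp φ ψ => .imp φ.elimAlw ψ.elimAlw
  | .probNext c l φ => .probNext c l φ.elimAlw
  | .probEv c l φ => .probEv c l φ.elimAlw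
  | .probAlw c l φ => .probEv c.flip l.compl (.not φ.elimAlw)

theorem rPCTL.val_elimAlw {AP S : Type} [Fintype S] (M : DTMC AP S)
    (μ : ∀ s : S, Measure (M.Path s)) (hμ : ∀ s, IsProbabilityMeasure (μ s)) (φ : PF AP)
    (s : S) : rPCTL.val M μ φ.elimAlw s = TV.ofProp (PCTL.Sat M μ φ s) := by
  induction φ generalizing s with
  | atom p => rfl
  | not φ ih => simp only [PF.elimAlw, rPCTL.val, PCTL.Sat, ih, TV.ite_ofProp_eq_top]
  | and φ ψ ihφ ihψ => simp only [PF.elimAlw, rPCTL.val, PCTL.Sat, ihφ, ihψ, TV.inf_ofProp]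
  | or φ ψ ihφ ihψ => simp only [PF.elimAlw, rPCTL.val, PCTL.Sat, ihφ, ihψ, TV.sup_ofProp]
  | imp φ ψ ihφ ihψ => simp only [PF.elimAlw, rPCTL.val, PCTL.Sat, ihφ, ihψ, TV.ite_ofProp_le]
  | probNext c l φ ih =>
    simp only [PF.elimAlw, rPCTL.val, PCTL.Sat, ih, TV.ofProp_b1, TV.ofProp_b2, TV.ofProp_b3,
      TV.ofProp_b4, TV.mk_boolOf]
  | probEv c l φ ih =>
    simp only [PF.elimAlw, rPCTL.val, PCTL.Sat, ih, TV.ofProp_b1, TV.ofProp_b2, TV.ofProp_b3,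
      TV.ofProp_b4, TV.mk_boolOf]
  | probAlw c l φ ih =>
    have hreach : {π : M.Path s | ∃ n, ¬PCTL.Sat M μ φ (π.1 n)} =
        (M.Safe s {t | PCTL.Sat M μ φ t})ᶜ := by
      ext π
      simp [DTMC.Safe]
    simp only [PF.elimAlw, rPCTL.val, PCTL.Sat, ih, TV.ite_ofProp_eq_top, TV.ofProp_b1,
      TV.ofProp_b2, TV.ofProp_b3, TV.ofProp_b4, TV.mk_boolOf, hreach,
      PCmp.holds_flip_measure_compl (M.measurableSet_safe s _)]
    rfl

/-- rPCTL is at least as expressive as PCTL(◊,□): for every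
PCTL(◊,□) formula `φ` there is an rPCTL formula `φ''` such that for every DTMC
`M` and state `s`, `M,s ⊨ φ` iff `V_M(s, φ'') = 1111`. -/
theorem rpctl_at_least_as_expressive_as_pctl {AP : Type} (φ : PF AP) :
    ∃ φ'' : PF AP,
      ∀ (S : Type) [Fintype S] (M : DTMC AP S)
        (μ : ∀ s : S, MeasureTheory.Measure (M.Path s)),
        (∀ s : S, M.IsCylinderMeasure s (μ s)) →
          ∀ s : S, PCTL.Sat M μ φ s ↔ rPCTL.val M μ φ'' s = TV.top := by
  refine ⟨φ.elimAlw, fun S _ M μ hμ s => ?_⟩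
  rw [rPCTL.val_elimAlw M μ (fun s => (hμ s).1), TV.ofProp_eq_top]
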